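/- For all real numbers x, y, z, the function x ↦ 𝒟(x,y,z) is differentiable and its derivative in x equals H(y+z, x); that is, ∂𝒟(x,y,z)/∂x = 1/(1 + e^{(y+z+x)/2}) + 1/(1 + e^{(y+z−x)/2}). -/

import Mathlib

/-!
With `c = e^{(y+z)/2}`, the quotient inside the logarithm splits `𝒟` as
`2 log(e^{x/2} + c) - 2 log(e^{-x/2} + c)`. The derivative of `u ↦ 2 log(e^{u/2} + c)` is
`e^{u/2}/(e^{u/2} + c) = 1/(1 + e^{(y+z-u)/2})`, and the chain rule through `u ↦ -u` turns the
second term into `1/(1 + e^{(y+z+x)/2})`.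
-/

noncomputable section

/-- The McShane–Mirzakhani function
`𝒟(x,y,z) = 2 log((e^{x/2} + e^{(y+z)/2})/(e^{−x/2} + e^{(y+z)/2}))`. -/
def Dfun (x y z : ℝ) : ℝ :=
  2 * Real.log ((Real.exp (x / 2) + Real.exp ((y + z) / 2)) /
      (Real.exp (-x / 2) + Real.exp ((y + z) / 2)))

/-- The kernel `H(x,y) = 1/(1 + e^{(x+y)/2}) + 1/(1 + e^{(x−y)/2})`. -/
def Hker (x y : ℝ) : ℝ :=
  1 / (1 + Real.exp ((x + y) / 2)) + 1 / (1 + Real.exp ((x - y) / 2))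

open Real

def logSumExpHalf (w u : ℝ) : ℝ := 2 * log (exp (u / 2) + exp (w / 2))

lemma Dfun_eq_logSumExpHalf_sub (x y z : ℝ) :
    Dfun x y z = logSumExpHalf (y + z) x - logSumExpHalf (y + z) (-x) := by
  rw [Dfun, logSumExpHalf, logSumExpHalf, log_div (by positivity) (by positivity), mul_sub]

lemma hasDerivAt_logSumExpHalf (w x : ℝ) :
    HasDerivAt (logSumExpHalf w) (1 / (1 + exp ((w - x) / 2))) x := by
  have h := ((((hasDerivAt_id x).div_const 2).exp.add_const (exp (w / 2))).log
    (by positivity)).const_mul 2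
  refine h.congr_deriv ?_
  rw [id, sub_div, exp_sub]
  field_simp

/-- For all `x, y, z`, the function `x ↦ 𝒟(x,y,z)` has derivative `H(y+z, x)` at `x`. -/
theorem Dfun_hasDerivAt (x y z : ℝ) :
    HasDerivAt (fun u : ℝ => Dfun u y z) (Hker (y + z) x) x := by
  simp_rw [Dfun_eq_logSumExpHalf_sub]
  refine ((hasDerivAt_logSumExpHalf (y + z) x).sub
    ((hasDerivAt_logSumExpHalf (y + z) (-x)).comp x (hasDerivAt_neg x))).congr_deriv ?_
  rw [Hker, sub_neg_eq_add]
  ring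

end
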